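/- For the Pell and Pell–Lucas numbers and every natural number n ≥ 1, Σ_{i=0}^{n} P(i)²·Q(n−i)·P(n−i) = P(n)·( (n−1)·P(n+1) + (n+1)·P(n−1) ) / 8. -/

import Mathlib

/-!
Write `P(i)² = (Q(2i) - 2(-1)ⁱ)/8` and `Q(m)P(m) = P(2m)`. The sum then splits into
`Σ Q(2i)P(2(n-i))`, which the addition formula `Q(a)P(b) + Q(b)P(a) = 2P(a+b)` pairs off
with its reflection to `(n+1)P(2n)`, and the alternating sum `Σ (-1)ⁱ P(2(n-i)) = P(n)P(n+1)`.
Finally `P(2n) = P(n)(P(n+1) + P(n-1))`.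
-/

noncomputable def pellR : ℕ → ℝ
  | 0 => 0
  | 1 => 1
  | n + 2 => 2 * pellR (n + 1) + pellR n

noncomputable def pellLucR : ℕ → ℝ
  | 0 => 2
  | 1 => 2
  | n + 2 => 2 * pellLucR (n + 1) + pellLucR n

theorem Finset.two_nsmul_sum_range_succ_of_add_reflect {M : Type*} [AddCommMonoid M]
    (f : ℕ → M) (n : ℕ) (c : M) (h : ∀ i ≤ n, f i + f (n - i) = c) :
    2 • ∑ i ∈ range (n + 1), f i = (n + 1) • c := by
  have hreflect : ∑ i ∈ range (n + 1), f (n - i) = ∑ i ∈ range (n + 1), f i := by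
    simpa using sum_range_reflect f (n + 1)
  calc 2 • ∑ i ∈ range (n + 1), f i
      = ∑ i ∈ range (n + 1), (f i + f (n - i)) := by
        rw [sum_add_distrib, hreflect, two_nsmul]
    _ = (n + 1) • c := by
        rw [sum_congr rfl fun i hi => h i (Nat.lt_succ_iff.mp (mem_range.mp hi)),
          sum_const, card_range]

theorem pellR_add_two (n : ℕ) : pellR (n + 2) = 2 * pellR (n + 1) + pellR n := by
  rw [pellR]

theorem pellLucR_add_two (n : ℕ) : pellLucR (n + 2) = 2 * pellLucR (n + 1) + pellLucR n := by
  rw [pellLucR]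

theorem pellLucR_eq (n : ℕ) : pellLucR n = 2 * (pellR (n + 1) - pellR n) := by
  induction n using Nat.twoStepInduction with
  | zero => norm_num [pellR, pellLucR]
  | one => norm_num [pellR, pellLucR]
  | more n ih ih1 =>
    rw [pellLucR_add_two, ih, ih1, pellR_add_two (n + 1), pellR_add_two]
    ring

theorem pellLucR_add_one (n : ℕ) : pellLucR (n + 1) = pellR (n + 2) + pellR n := by
  rw [pellLucR_eq, pellR_add_two]
  ring

theorem two_mul_pellR_add (a b : ℕ) :
    2 * pellR (a + b) = pellLucR a * pellR b + pellLucR b * pellR a := by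
  induction b using Nat.twoStepInduction with
  | zero => simp [pellR, pellLucR]
  | one => simp only [pellR, pellLucR, pellLucR_eq a]; ring
  | more b ih ih1 =>
    rw [← add_assoc] at ih1
    rw [← add_assoc, pellR_add_two, pellLucR_add_two, pellR_add_two]
    linear_combination 2 * ih1 + ih

theorem pellR_two_mul (n : ℕ) : pellR (2 * n) = pellLucR n * pellR n := by
  have h := two_mul_pellR_add n n
  rw [← two_mul] at h
  linarith

theorem pellR_two_mul' (n : ℕ) : pellR (2 * n) = pellR n * (pellR (n + 1) + pellR (n - 1)) := by
  cases n with
  | zero => simp [pellR]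
  | succ m => rw [pellR_two_mul, pellLucR_add_one, Nat.add_sub_cancel]; ring

theorem pellR_cassini (n : ℕ) :
    pellR (n + 1) ^ 2 - 2 * pellR (n + 1) * pellR n - pellR n ^ 2 = (-1) ^ n := by
  induction n with
  | zero => norm_num [pellR]
  | succ m ih =>
    rw [pellR_add_two]
    linear_combination -ih

theorem pellLucR_two_mul (n : ℕ) : pellLucR (2 * n) = 8 * pellR n ^ 2 + 2 * (-1) ^ n := by
  have hodd := two_mul_pellR_add (n + 1) n
  rw [show n + 1 + n = 2 * n + 1 by ring, pellLucR_eq (n + 1), pellLucR_eq n,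
    pellR_add_two] at hodd
  rw [pellLucR_eq, pellR_two_mul, pellLucR_eq]
  linear_combination hodd + 2 * pellR_cassini n

theorem sum_pellLucR_two_mul_mul_pellR (n : ℕ) :
    ∑ i ∈ Finset.range (n + 1), pellLucR (2 * i) * pellR (2 * (n - i)) =
      (n + 1) * pellR (2 * n) := by
  have h := Finset.two_nsmul_sum_range_succ_of_add_reflect
    (fun i => pellLucR (2 * i) * pellR (2 * (n - i))) n (2 * pellR (2 * n)) fun i hi => by
      have h := two_mul_pellR_add (2 * i) (2 * (n - i))
      rw [← mul_add, Nat.add_sub_cancel' hi] at h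
      rw [Nat.sub_sub_self hi, h, mul_comm (pellLucR _)]
  simp only [nsmul_eq_mul] at h
  push_cast at h
  linarith

theorem sum_neg_one_pow_mul_pellR_two_mul (n : ℕ) :
    ∑ i ∈ Finset.range (n + 1), (-1 : ℝ) ^ i * pellR (2 * (n - i)) = pellR n * pellR (n + 1) := by
  induction n with
  | zero => simp [pellR]
  | succ m ih =>
    have hshift : ∀ i ∈ Finset.range (m + 1),
        (-1 : ℝ) ^ (i + 1) * pellR (2 * (m + 1 - (i + 1))) = -((-1) ^ i * pellR (2 * (m - i))) :=
      fun i _ => by rw [Nat.add_sub_add_right, pow_succ]; ring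
    rw [Finset.sum_range_succ', Finset.sum_congr rfl hshift, Finset.sum_neg_distrib, ih,
      pow_zero, Nat.sub_zero, one_mul, pellR_two_mul, pellLucR_add_one]
    ring

theorem pell_product_convolution_general (n : ℕ) :
    ∑ i ∈ Finset.range (n + 1), pellR i ^ 2 * pellLucR (n - i) * pellR (n - i) =
      pellR n * (((n : ℝ) - 1) * pellR (n + 1) + ((n : ℝ) + 1) * pellR (n - 1)) / 8 := by
  have hterm : ∀ i ∈ Finset.range (n + 1),
      pellR i ^ 2 * pellLucR (n - i) * pellR (n - i) =
        (pellLucR (2 * i) * pellR (2 * (n - i)) - 2 * ((-1) ^ i * pellR (2 * (n - i)))) / 8 :=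
    fun i _ => by rw [mul_assoc, ← pellR_two_mul, pellLucR_two_mul]; ring
  rw [Finset.sum_congr rfl hterm, ← Finset.sum_div, Finset.sum_sub_distrib, ← Finset.mul_sum,
    sum_pellLucR_two_mul_mul_pellR, sum_neg_one_pow_mul_pellR_two_mul, pellR_two_mul']
  ring

theorem pell_product_convolution (n : ℕ) (hn : 1 ≤ n) :
    ∑ i ∈ Finset.range (n + 1), pellR i ^ 2 * pellLucR (n - i) * pellR (n - i) =
      pellR n * (((n : ℝ) - 1) * pellR (n + 1) + ((n : ℝ) + 1) * pellR (n - 1)) / 8 :=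
  pell_product_convolution_general n
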